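/- Let G be a finite weighted complete graph with weights in [0,1] and G_ε its ε-thresholded version. The map sending each finite persistence point (0,d) of D_0(G) with d ≤ ε to itself, each point with ε < d ≤ 1 to (0,1), and the essential point to the essential point, is a bijection between D_0(G) and D_0(G_ε), and its per-point displacement is 0 for d ≤ ε and |1 − d| < 1 − ε for ε < d ≤ 1. -/

import Mathlib

open scoped Classical
noncomputable section

variable {V : Type*} [Fintype V]

/-- Vietoris–Rips 1-skeleton of a weighted complete graph at scale `α`. -/
def vrGraph (w : V → V → ℝ) (α : ℝ) : SimpleGraph V where
  Adj i j := i ≠ j ∧ max (w i j) (w j i) ≤ α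
  symm := by
    constructor
    intro i j h
    exact ⟨h.1.symm, by rw [max_comm]; exact h.2⟩
  loopless := ⟨fun i h => h.1 rfl⟩

/-- Number of connected components of the Rips 1-skeleton at scale `α`. -/
def compCount (w : V → V → ℝ) (α : ℝ) : ℕ :=
  Nat.card (vrGraph w α).ConnectedComponent

/-- Left limit of the component counting function at `d`. -/
def compCountLeft (w : V → V → ℝ) (d : ℝ) : ℕ :=
  sInf (compCount w '' Set.Iio d)

/-- Multiplicity of `d` as a finite death time in the `H₀` persistence diagram. -/
def deathMult (w : V → V → ℝ) (d : ℝ) : ℕ :=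
  compCountLeft w d - compCount w d

/-- The finitely many candidate filtration values (the edge weights). -/
def weightVals (w : V → V → ℝ) : Finset ℝ :=
  Finset.image (fun p : V × V => max (w p.1 p.2) (w p.2 p.1)) Finset.univ

/-- The multiset of finite death times of the 0-dimensional persistence diagram
of the Vietoris–Rips filtration of the weighted complete graph `w`. -/
def finiteDeaths (w : V → V → ℝ) : Multiset ℝ :=
  (weightVals w).val.bind fun d => Multiset.replicate (deathMult w d) d

/-- The 0-dimensional persistence diagram (finite points; all births are `0`). -/
def D0 (w : V → V → ℝ) : Multiset (ℝ × ℝ) :=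
  (finiteDeaths w).map fun d => (0, d)

/-- Threshold modification: weights above `ε` are raised to `1`. -/
def thresh (w : V → V → ℝ) (ε : ℝ) : V → V → ℝ :=
  fun i j => if w i j ≤ ε then w i j else 1

/-!
Thresholding applies the monotone map `g x = if x ≤ ε then x else 1` to the weights. On weights
at most `1` it has the upper adjoint `h α = if α < 1 then min α ε else α`, i.e. `g m ≤ α ↔ m ≤ h α`,
so the Rips graph of `G_ε` at scale `α` is the Rips graph of `G` at scale `h α`. Telescoping the
death multiplicities, the number of deaths in `(a, b]` is the drop of the component count from `a`
to `b`. Hence the deaths of `G_ε` in `(a, b]` are counted by the deaths of `G` in `(h a, h b]`,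
that is, by the deaths of `G` whose image under `g` lies in `(a, b]`; and a finite multiset of
reals is determined by how many of its points lie in each interval `(a, b]`.
-/

open Set

lemma Finset.exists_mem_Ico_forall_notMem_Ioo {α : Type*} [LinearOrder α] (s : Finset α)
    {a v : α} (hav : a < v) : ∃ a' ∈ Set.Ico a v, ∀ x ∈ s, x ∉ Set.Ioo a' v := by
  set t := insert a (s.filter (· < v))
  have ht : t.Nonempty := Finset.insert_nonempty _ _
  refine ⟨t.max' ht, ⟨t.le_max' a (Finset.mem_insert_self _ _), (t.max'_lt_iff ht).2 fun x hx => ?_⟩,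
    fun x hx ⟨hax, hxv⟩ => ?_⟩
  · rcases Finset.mem_insert.1 hx with rfl | hx
    · exact hav
    · exact (Finset.mem_filter.1 hx).2
  · exact hax.not_ge (t.le_max' x (Finset.mem_insert_of_mem (Finset.mem_filter.2 ⟨hx, hxv⟩)))

lemma Finset.filter_mem_Ioc_eq_insert {α : Type*} [LinearOrder α] {s : Finset α} {a a' b d : α}
    (hd : IsGreatest ↑{x ∈ s | x ∈ Set.Ioc a b} d) (ha' : a' ∈ Set.Ico a d)
    (hgap : ∀ x ∈ s, x ∉ Set.Ioo a' d) :
    {x ∈ s | x ∈ Set.Ioc a b} = insert d {x ∈ s | x ∈ Set.Ioc a a'} := by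
  obtain ⟨hds, had, hdb⟩ := Finset.mem_filter.1 (Finset.mem_coe.1 hd.1)
  ext x
  simp only [Finset.mem_insert, Finset.mem_filter, Set.mem_Ioc]
  refine ⟨fun ⟨hxs, hax, hxb⟩ => ?_, ?_⟩
  · have hxd : x ≤ d := hd.2 (Finset.mem_filter.2 ⟨hxs, hax, hxb⟩)
    exact hxd.eq_or_lt.imp_right fun hxd' =>
      ⟨hxs, hax, not_lt.1 fun ha'x => hgap x hxs ⟨ha'x, hxd'⟩⟩
  · rintro (rfl | ⟨hxs, hax, hxa'⟩)
    · exact ⟨hds, had, hdb⟩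
    · exact ⟨hxs, hax, hxa'.trans (ha'.2.le.trans hdb)⟩

lemma Multiset.eq_of_forall_countP_Ioc_eq {α : Type*} [LinearOrder α] [NoMinOrder α]
    {M M' : Multiset α} (h : ∀ a b, M.countP (· ∈ Set.Ioc a b) = M'.countP (· ∈ Set.Ioc a b)) :
    M = M' := by
  ext v
  obtain ⟨a₀, ha₀⟩ := exists_lt v
  obtain ⟨a, ⟨-, hav⟩, hgap⟩ := (M + M').toFinset.exists_mem_Ico_forall_notMem_Ioo ha₀
  have hcount : ∀ N ≤ M + M', N.count v = N.countP (· ∈ Set.Ioc a v) := fun N hN =>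
    Multiset.countP_congr rfl fun x hx => propext ⟨by rintro rfl; exact ⟨hav, le_rfl⟩,
      fun ⟨hax, hxv⟩ => (hxv.eq_of_not_lt fun hxv' =>
        hgap x (Multiset.mem_toFinset.2 (Multiset.mem_of_le hN hx)) ⟨hax, hxv'⟩).symm⟩
  rw [hcount M (Multiset.le_add_right M M'), hcount M' (Multiset.le_add_left M' M), h]

section RipsH0

variable (w : V → V → ℝ)

lemma compCount_antitone : Antitone (compCount w) := fun _ _ hab =>
  SimpleGraph.ConnectedComponent.card_le_card_of_le fun _ _ h => ⟨h.1, h.2.trans hab⟩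

lemma max_mem_weightVals (i j : V) : max (w i j) (w j i) ∈ weightVals w :=
  Finset.mem_image_of_mem _ (Finset.mem_univ (i, j))

lemma le_of_mem_weightVals {c : ℝ} (hw : ∀ i j, w i j ≤ c) {u : ℝ} (hu : u ∈ weightVals w) :
    u ≤ c := by
  obtain ⟨p, -, rfl⟩ := Finset.mem_image.1 hu
  exact max_le (hw _ _) (hw _ _)

lemma compCount_le_of_forall_notMem_Ioc {a b : ℝ} (h : ∀ u ∈ weightVals w, u ∉ Ioc a b) :
    compCount w a ≤ compCount w b :=
  SimpleGraph.ConnectedComponent.card_le_card_of_le fun i j hij => ⟨hij.1, not_lt.1 fun hlt =>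
    h _ (max_mem_weightVals w i j) ⟨hlt, hij.2⟩⟩

lemma compCountLeft_eq_of_forall_notMem_Ioo {a d : ℝ} (had : a < d)
    (h : ∀ u ∈ weightVals w, u ∉ Ioo a d) : compCountLeft w d = compCount w a := by
  refine IsLeast.csInf_eq ⟨⟨a, had, rfl⟩, ?_⟩
  rintro _ ⟨β, hβd, rfl⟩
  exact compCount_le_of_forall_notMem_Ioc w fun u hu hu' => h u hu ⟨hu'.1, hu'.2.trans_lt hβd⟩

lemma mem_weightVals_of_mem_finiteDeaths {d : ℝ} (hd : d ∈ finiteDeaths w) :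
    d ∈ weightVals w := by
  obtain ⟨u, hu, hdu⟩ := Multiset.mem_bind.1 hd
  rwa [Multiset.eq_of_mem_replicate hdu]

lemma countP_finiteDeaths (p : ℝ → Prop) [DecidablePred p] :
    (finiteDeaths w).countP p = ∑ d ∈ weightVals w with p d, deathMult w d := by
  rw [Finset.sum_filter, finiteDeaths, Multiset.countP_eq_card_filter, Multiset.filter_bind,
    Multiset.card_bind]
  refine Finset.sum_congr rfl fun d _ => ?_
  have hrep : ∀ x ∈ Multiset.replicate (deathMult w d) d, p x ↔ p d := fun x hx => by
    rw [Multiset.eq_of_mem_replicate hx]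
  split_ifs with hd
  · simp [Multiset.filter_eq_self.2 fun x hx => (hrep x hx).2 hd]
  · simp [Multiset.filter_eq_nil.2 fun x hx => mt (hrep x hx).1 hd]

/-- Induction on the number of weights in `(a, b]`: the deaths at the largest one `d` account for
the drop of the component count from just below `d` to `d`. -/
lemma countP_Ioc_finiteDeaths (a b : ℝ) :
    (finiteDeaths w).countP (· ∈ Ioc a b) = compCount w a - compCount w b := by
  rw [countP_finiteDeaths]
  obtain ⟨n, hn⟩ : ∃ n, {d ∈ weightVals w | d ∈ Ioc a b}.card = n := ⟨_, rfl⟩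
  induction n generalizing b with
  | zero =>
    have hle : compCount w a ≤ compCount w b :=
      compCount_le_of_forall_notMem_Ioc w fun u hu hab =>
        Finset.notMem_empty u (Finset.card_eq_zero.1 hn ▸ Finset.mem_filter.2 ⟨hu, hab⟩)
    rw [Finset.card_eq_zero.1 hn, Finset.sum_empty, Nat.sub_eq_zero_of_le hle]
  | succ n ih =>
    set S := {d ∈ weightVals w | d ∈ Ioc a b}
    have hS : S.Nonempty := Finset.card_pos.1 (by omega)
    obtain ⟨d, hd⟩ : ∃ d, IsGreatest (S : Set ℝ) d := ⟨_, S.isGreatest_max' hS⟩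
    obtain ⟨hdW, had, hdb⟩ := Finset.mem_filter.1 (Finset.mem_coe.1 hd.1)
    obtain ⟨a', ha', hgap⟩ := (weightVals w).exists_mem_Ico_forall_notMem_Ioo had
    have hsplit : S = insert d {x ∈ weightVals w | x ∈ Ioc a a'} :=
      Finset.filter_mem_Ioc_eq_insert hd ha' hgap
    have hd_notMem : d ∉ {x ∈ weightVals w | x ∈ Ioc a a'} := fun hmem =>
      ha'.2.not_ge (Finset.mem_filter.1 hmem).2.2
    have hcard : {x ∈ weightVals w | x ∈ Ioc a a'}.card = n := by
      rw [hsplit, Finset.card_insert_of_notMem hd_notMem] at hn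
      omega
    have hleft : compCountLeft w d = compCount w a' :=
      compCountLeft_eq_of_forall_notMem_Ioo w ha'.2 hgap
    have hright : compCount w d ≤ compCount w b :=
      compCount_le_of_forall_notMem_Ioc w fun u hu hu' =>
        hu'.1.not_ge (hd.2 (Finset.mem_filter.2 ⟨hu, had.trans hu'.1, hu'.2⟩))
    have h₁ := compCount_antitone w hdb
    have h₂ := compCount_antitone w ha'.2.le
    have h₃ := compCount_antitone w ha'.1
    rw [hsplit, Finset.sum_insert hd_notMem, ih a' hcard, deathMult, hleft]
    omega

lemma vrGraph_comp_eq {g h : ℝ → ℝ} (hg : Monotone g)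
    (hgh : ∀ m ∈ weightVals w, ∀ α, g m ≤ α ↔ m ≤ h α) (α : ℝ) :
    vrGraph (fun i j => g (w i j)) α = vrGraph w (h α) := by
  ext i j
  exact and_congr_right fun _ => by rw [← hg.map_max, hgh _ (max_mem_weightVals w i j)]

theorem finiteDeaths_comp {g h : ℝ → ℝ} (hg : Monotone g)
    (hgh : ∀ m ∈ weightVals w, ∀ α, g m ≤ α ↔ m ≤ h α) :
    finiteDeaths (fun i j => g (w i j)) = (finiteDeaths w).map g := by
  have hcomp : ∀ α, compCount (fun i j => g (w i j)) α = compCount w (h α) := fun α => by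
    rw [compCount, vrGraph_comp_eq w hg hgh, compCount]
  refine Multiset.eq_of_forall_countP_Ioc_eq fun a b => ?_
  rw [countP_Ioc_finiteDeaths, hcomp, hcomp, ← countP_Ioc_finiteDeaths, Multiset.countP_map,
    ← Multiset.countP_eq_card_filter]
  refine Multiset.countP_congr rfl fun x hx => ?_
  simp only [mem_Ioc, ← not_le, hgh x (mem_weightVals_of_mem_finiteDeaths w hx)]

end RipsH0

lemma monotone_threshold {ε : ℝ} (hε : ε ≤ 1) : Monotone fun x : ℝ => if x ≤ ε then x else 1 := by
  intro x y hxy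
  dsimp only
  split_ifs <;> linarith

lemma threshold_le_iff {ε m α : ℝ} (hm : m ≤ 1) :
    (if m ≤ ε then m else 1) ≤ α ↔ m ≤ if α < 1 then min α ε else α := by
  split_ifs <;> (try rw [le_min_iff]) <;> constructor <;> intro <;> (try constructor) <;> linarith

theorem explicit_bijection_thresholded_general
    {N : ℕ} (w : Fin N → Fin N → ℝ)
    (hw1 : ∀ i j, w i j ≤ 1)
    (ε : ℝ) (hε1 : ε ≤ 1) :
    finiteDeaths (thresh w ε)
      = (finiteDeaths w).map (fun d => if d ≤ ε then d else 1) ∧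
    (∀ d ∈ finiteDeaths w, d ≤ 1) ∧
    (∀ d ∈ finiteDeaths w,
      (d ≤ ε → |(if d ≤ ε then d else 1) - d| = 0) ∧
      (ε < d → |1 - d| < 1 - ε)) := by
  have hweight_le : ∀ u ∈ weightVals w, u ≤ 1 := fun u => le_of_mem_weightVals w hw1
  have hdeath_le : ∀ d ∈ finiteDeaths w, d ≤ 1 := fun d hd =>
    hweight_le d (mem_weightVals_of_mem_finiteDeaths w hd)
  have hpush : finiteDeaths (thresh w ε) = (finiteDeaths w).map fun d => if d ≤ ε then d else 1 :=
    finiteDeaths_comp w (g := fun x => if x ≤ ε then x else 1)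
      (h := fun α => if α < 1 then min α ε else α) (monotone_threshold hε1)
      fun m hm _ => threshold_le_iff (hweight_le m hm)
  refine ⟨hpush, hdeath_le, fun d hd => ⟨fun hdε => by rw [if_pos hdε, sub_self, abs_zero], ?_⟩⟩
  intro hεd
  rw [abs_of_nonneg (sub_nonneg.2 (hdeath_le d hd))]
  linarith

/-- The map sending each finite death `d ≤ ε` of `G` to itself
and each finite death `d > ε` to `1` is a bijection from the finite part of
`D₀(G)` onto the finite part of `D₀(G_ε)` (the essential class maps to the
essential class); its per-point displacement is `0` when `d ≤ ε` and
`|1 - d| < 1 - ε` when `ε < d ≤ 1`. -/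
theorem explicit_bijection_thresholded
    {N : ℕ} (w : Fin N → Fin N → ℝ)
    (hw0 : ∀ i j, 0 ≤ w i j) (hw1 : ∀ i j, w i j ≤ 1)
    (hsymm : ∀ i j, w i j = w j i)
    (ε : ℝ) (hε0 : 0 ≤ ε) (hε1 : ε ≤ 1) :
    finiteDeaths (thresh w ε)
      = (finiteDeaths w).map (fun d => if d ≤ ε then d else 1) ∧
    (∀ d ∈ finiteDeaths w, d ≤ 1) ∧
    (∀ d ∈ finiteDeaths w,
      (d ≤ ε → |(if d ≤ ε then d else 1) - d| = 0) ∧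
      (ε < d → |1 - d| < 1 - ε)) :=
  explicit_bijection_thresholded_general w hw1 ε hε1

end
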